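/- arXiv:1112.4309 — 8 statements merged into one kernel-verified Lean document; each statement's English description precedes it below -/
import Mathlib

section
/- Let c₁ ≥ c₂ ≥ 0 and c₃ be real numbers and suppose that c₃ ≠ 0 or c₂ > 0. Then the function φ_c : ℝ → ℝ is infinitely differentiable (C^∞), and moreover φ_c(t) + c₂ > 0 for every t ∈ ℝ; consequently ψ_c(t) := √(φ_c(t) + c₁)·√(φ_c(t) + c₂) > 0 for every t ∈ ℝ. -/
/-! Locally, `φ = g ∘ (t ↦ t² + c₃²)` where `g` is a local inverse of the cubic
`P x = (x + c₁)(x + c₂)x` near `φ t`. By the inverse function theorem `g` exists and is smooth,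
because `P' > 0` at `φ t`: indeed `φ t ≥ 0` and `φ t + c₂ > 0`, the latter since either `c₂ > 0`
or `c₃ ≠ 0` forces `φ t ≠ 0`. That `φ` really is `g ∘ (t ↦ t² + c₃²)` near `t` follows from
uniqueness of the nonnegative root of `P x = t² + c₃²`. -/

open Filter Set Topology

-- Near `t₀`, `f` agrees with `g ∘ q` for the smooth local inverse `g` of `P`.
theorem contDiffAt_of_apply_eq_of_eventually_unique {𝕜 E F G : Type*} [RCLike 𝕜]
    [NormedAddCommGroup E] [NormedSpace 𝕜 E] [CompleteSpace E]
    [NormedAddCommGroup F] [NormedSpace 𝕜 F] [NormedAddCommGroup G] [NormedSpace 𝕜 G]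
    {n : WithTop ℕ∞} (hn : n ≠ 0) {P : E → F} {P' : E ≃L[𝕜] F} {q : G → F} {f : G → E} {t₀ : G}
    (hP : ContDiffAt 𝕜 n P (f t₀)) (hP' : HasFDerivAt P (P' : E →L[𝕜] F) (f t₀))
    (hq : ContDiffAt 𝕜 n q t₀) (hf : P (f t₀) = q t₀)
    (huniq : ∀ᶠ x in 𝓝 (f t₀), ∀ t, P x = q t → x = f t) :
    ContDiffAt 𝕜 n f t₀ := by
  set g := hP.localInverse hP' hn
  have hstrict := hP.hasStrictFDerivAt' hP' hn
  have hq_tendsto : Tendsto q (𝓝 t₀) (𝓝 (P (f t₀))) := hf ▸ hq.continuousAt.tendsto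
  have hg_tendsto : Tendsto (g ∘ q) (𝓝 t₀) (𝓝 (f t₀)) := by
    have hg : Tendsto g (𝓝 (P (f t₀))) (𝓝 (g (P (f t₀)))) :=
      hstrict.localInverse_continuousAt.tendsto
    rw [show g (P (f t₀)) = f t₀ from hP.localInverse_apply_image hP' hn] at hg
    exact hg.comp hq_tendsto
  have hright : ∀ᶠ t in 𝓝 t₀, P (g (q t)) = q t :=
    hq_tendsto.eventually hstrict.eventually_right_inverse
  have heq : f =ᶠ[𝓝 t₀] g ∘ q := by
    filter_upwards [hright, hg_tendsto.eventually huniq] with t hsol hunique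
    exact (hunique t hsol).symm
  have hg_smooth : ContDiffAt 𝕜 n g (q t₀) := hf ▸ hP.to_localInverse hP' hn
  exact (hg_smooth.comp t₀ hq).congr_of_eventuallyEq heq

section Cubic

variable {c₁ c₂ : ℝ}

theorem cubic_strictMonoOn (h₁ : 0 ≤ c₁) (h₂ : 0 ≤ c₂) :
    StrictMonoOn (fun x : ℝ => (x + c₁) * (x + c₂) * x) (Ici 0) := by
  intro a ha b hb hab
  simp only [mem_Ici] at ha hb
  calc (a + c₁) * (a + c₂) * a ≤ (b + c₁) * (b + c₂) * a := by gcongr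
    _ < (b + c₁) * (b + c₂) * b := by gcongr; exact mul_pos (by linarith) (by linarith)

theorem hasDerivAt_cubic (x : ℝ) :
    HasDerivAt (fun x : ℝ => (x + c₁) * (x + c₂) * x)
      ((x + c₂) * x + (x + c₁) * x + (x + c₁) * (x + c₂)) x :=
  ((((hasDerivAt_id' x).add_const c₁).fun_mul ((hasDerivAt_id' x).add_const c₂)).fun_mul
    (hasDerivAt_id' x)).congr_deriv (by ring)

theorem nonneg_of_cubic_nonneg (h₁ : c₂ ≤ c₁) {x : ℝ} (hx : -c₂ < x)
    (hP : 0 ≤ (x + c₁) * (x + c₂) * x) : 0 ≤ x := by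
  by_contra! hneg
  exact hP.not_gt (mul_neg_of_pos_of_neg (mul_pos (by linarith) (by linarith)) hneg)

theorem add_pos_of_cubic_eq {c₃ x t : ℝ} (h₂ : 0 ≤ c₂) (h₃ : c₃ ≠ 0 ∨ 0 < c₂) (hx : 0 ≤ x)
    (h : (x + c₁) * (x + c₂) * x = t ^ 2 + c₃ ^ 2) : 0 < x + c₂ := by
  rcases h₃ with h₃ | h₃
  · have hx₀ : x ≠ 0 := by
      rintro rfl
      have hrhs : 0 < t ^ 2 + c₃ ^ 2 := by positivity
      simp [← h] at hrhs
    have := hx.lt_of_ne' hx₀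
    linarith
  · linarith

end Cubic

/-- Let `c₁ ≥ c₂ ≥ 0` and `c₃` be reals with `c₃ ≠ 0` or `c₂ > 0`.
If `φ : ℝ → ℝ` is the function assigning to `t` the unique `x ≥ 0` with
`(x + c₁)(x + c₂)x = t² + c₃²` (expressed here by the defining property `hφ`), then
`φ` is `C^∞`, `φ t + c₂ > 0` for all `t`, and consequently
`ψ(t) = √(φ t + c₁)·√(φ t + c₂) > 0` for all `t`. -/
theorem phi_smooth_and_positive (c₁ c₂ c₃ : ℝ) (h₁ : c₂ ≤ c₁) (h₂ : 0 ≤ c₂)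
    (h₃ : c₃ ≠ 0 ∨ 0 < c₂) (φ : ℝ → ℝ)
    (hφ : ∀ t, 0 ≤ φ t ∧ (φ t + c₁) * (φ t + c₂) * φ t = t ^ 2 + c₃ ^ 2) :
    ContDiff ℝ (⊤ : ℕ∞) φ ∧ (∀ t, 0 < φ t + c₂) ∧
      ∀ t, 0 < Real.sqrt (φ t + c₁) * Real.sqrt (φ t + c₂) := by
  have hpos₂ (t : ℝ) : 0 < φ t + c₂ := add_pos_of_cubic_eq h₂ h₃ (hφ t).1 (hφ t).2
  have hpos₁ (t : ℝ) : 0 < φ t + c₁ := (hpos₂ t).trans_le (by linarith)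
  refine ⟨contDiff_iff_contDiffAt.2 fun t₀ => ?_, hpos₂,
    fun t => mul_pos (Real.sqrt_pos.2 (hpos₁ t)) (Real.sqrt_pos.2 (hpos₂ t))⟩
  have hderiv_pos : 0 < (φ t₀ + c₂) * φ t₀ + (φ t₀ + c₁) * φ t₀ + (φ t₀ + c₁) * (φ t₀ + c₂) := by
    have := (hφ t₀).1
    have := hpos₁ t₀
    have := hpos₂ t₀
    positivity
  refine contDiffAt_of_apply_eq_of_eventually_unique (P := fun x => (x + c₁) * (x + c₂) * x)
    (q := fun t => t ^ 2 + c₃ ^ 2)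
    (by simp) (by fun_prop) ((hasDerivAt_cubic _).hasFDerivAt_equiv hderiv_pos.ne') (by fun_prop)
    (hφ t₀).2 ?_
  -- On `(-c₂, ∞)` the cubic takes nonnegative values only on `[0, ∞)`, where it is injective.
  filter_upwards [Ioi_mem_nhds (neg_lt_iff_pos_add.2 (hpos₂ t₀))] with x hx t hxt
  have hx₀ : 0 ≤ x := nonneg_of_cubic_nonneg h₁ hx (hxt ▸ by positivity)
  exact (cubic_strictMonoOn (h₂.trans h₁) h₂).injOn hx₀ (hφ t).1 (hxt.trans (hφ t).2.symm)
end

section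
/- Let c₁ ≥ c₂ ≥ 0 and c₃ be real numbers with c₃ ≠ 0 or c₂ > 0, and let c = (c₁, c₂, c₃). Then for every t ∈ ℝ and all u, v ∈ S¹, the point Φ_c(t, u, v) lies in F⁻¹(c), i.e. F(Φ_c(t, u, v)) = (c₁, c₂, c₃). -/
/-! Choosing `z₃ = w / (z₁ z₂)` makes `z₁ z₂ z₃ = w`, so the third component of `F` is `Im w`
whatever `z₁, z₂` are, and `|z₃|² = |w|² / (|z₁|² |z₂|²)`. With `|z₁|² = x + c₁`,
`|z₂|² = x + c₂` and `|w|² = t² + c₃² = (x + c₁)(x + c₂) x`, this gives `|z₃|² = x`, hence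
the first two components `c₁, c₂`. Where `z₁ z₂ = 0` the cubic forces `w = 0` and `x = 0`,
so the junk value `w / 0 = 0` is the right one. -/

open Complex

/-- The Harvey–Lawson fibration `F : ℂ³ → ℝ³`,
`F(z₁,z₂,z₃) = (|z₁|² − |z₃|², |z₂|² − |z₃|², Im(z₁z₂z₃))`. -/
noncomputable def HLfib (z : ℂ × ℂ × ℂ) : ℝ × ℝ × ℝ :=
  (normSq z.1 - normSq z.2.2, normSq z.2.1 - normSq z.2.2, (z.1 * z.2.1 * z.2.2).im)

theorem HLfib_div_mul (z₁ z₂ w : ℂ) (h : z₁ * z₂ = 0 → w = 0) :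
    HLfib (z₁, z₂, w / (z₁ * z₂)) =
      (normSq z₁ - normSq w / (normSq z₁ * normSq z₂),
        normSq z₂ - normSq w / (normSq z₁ * normSq z₂), w.im) := by
  simp only [HLfib, normSq_div, normSq_mul, mul_div_cancel_of_imp' h]

theorem normSq_ofReal_sqrt_mul {a : ℝ} (ha : 0 ≤ a) {u : ℂ} (hu : ‖u‖ = 1) :
    normSq ((Real.sqrt a : ℂ) * u) = a := by
  rw [normSq_mul, normSq_ofReal, Real.mul_self_sqrt ha, normSq_eq_norm_sq, hu, one_pow, mul_one]

theorem point_in_fibre_general (c₁ c₂ c₃ : ℝ) (h₁ : c₂ ≤ c₁) (h₂ : 0 ≤ c₂)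
    (φ : ℝ → ℝ)
    (hφ : ∀ t, 0 ≤ φ t ∧ (φ t + c₁) * (φ t + c₂) * φ t = t ^ 2 + c₃ ^ 2)
    (t : ℝ) (u v : ℂ) (hu : ‖u‖ = 1) (hv : ‖v‖ = 1) :
    HLfib ((Real.sqrt (φ t + c₁) : ℂ) * u, (Real.sqrt (φ t + c₂) : ℂ) * v,
        ((t : ℂ) + (c₃ : ℂ) * Complex.I) /
          (((Real.sqrt (φ t + c₁) * Real.sqrt (φ t + c₂) : ℝ) : ℂ) * u * v))
      = (c₁, c₂, c₃) := by
  obtain ⟨hx, hcubic⟩ := hφ t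
  set x := φ t
  set w : ℂ := (t : ℂ) + (c₃ : ℂ) * I
  have hz₁ := normSq_ofReal_sqrt_mul (by linarith : 0 ≤ x + c₁) hu
  have hz₂ := normSq_ofReal_sqrt_mul (by linarith : 0 ≤ x + c₂) hv
  have hw : normSq w = (x + c₁) * (x + c₂) * x := by rw [normSq_add_mul_I, hcubic]
  have hdegenerate : (x + c₁) * (x + c₂) = 0 → x = 0 := by
    intro h
    rcases mul_eq_zero.mp h with h | h <;> linarith
  have hw₀ : (Real.sqrt (x + c₁) : ℂ) * u * ((Real.sqrt (x + c₂) : ℂ) * v) = 0 → w = 0 := by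
    intro h
    have hprod := congrArg normSq h
    rw [normSq_mul, hz₁, hz₂, map_zero] at hprod
    rw [← normSq_eq_zero, hw, hprod, zero_mul]
  have hden : (((Real.sqrt (x + c₁) * Real.sqrt (x + c₂) : ℝ) : ℂ) * u * v) =
      (Real.sqrt (x + c₁) : ℂ) * u * ((Real.sqrt (x + c₂) : ℂ) * v) := by
    push_cast; ring
  rw [hden, HLfib_div_mul _ _ _ hw₀, hz₁, hz₂, hw, mul_div_cancel_left_of_imp hdegenerate]
  simp [w]

/-- For `c₁ ≥ c₂ ≥ 0` and `c₃` with `c₃ ≠ 0` or `c₂ > 0`, and `φ = φ_c`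
the unique-root function (expressed by its defining property `hφ`), the point
`Φ_c(t,u,v) = (√(φ t + c₁)·u, √(φ t + c₂)·v, (t + i c₃)/(ψ_c(t)·u·v))` lies in the fibre
`F⁻¹(c₁,c₂,c₃)` for every `t ∈ ℝ` and all `u, v` on the unit circle. -/
theorem point_in_fibre (c₁ c₂ c₃ : ℝ) (h₁ : c₂ ≤ c₁) (h₂ : 0 ≤ c₂)
    (h₃ : c₃ ≠ 0 ∨ 0 < c₂) (φ : ℝ → ℝ)
    (hφ : ∀ t, 0 ≤ φ t ∧ (φ t + c₁) * (φ t + c₂) * φ t = t ^ 2 + c₃ ^ 2)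
    (t : ℝ) (u v : ℂ) (hu : ‖u‖ = 1) (hv : ‖v‖ = 1) :
    HLfib ((Real.sqrt (φ t + c₁) : ℂ) * u, (Real.sqrt (φ t + c₂) : ℂ) * v,
        ((t : ℂ) + (c₃ : ℂ) * Complex.I) /
          (((Real.sqrt (φ t + c₁) * Real.sqrt (φ t + c₂) : ℝ) : ℂ) * u * v))
      = (c₁, c₂, c₃) :=
  point_in_fibre_general c₁ c₂ c₃ h₁ h₂ φ hφ t u v hu hv
end

section
/- Let c₁ ≥ c₂ ≥ 0 and c₃ be real numbers with c₃ ≠ 0 or c₂ > 0, and let c = (c₁, c₂, c₃). Then Φ_c is a homeomorphism from ℝ × S¹ × S¹ onto the fibre F⁻¹(c) (with its subspace topology from ℂ³). In particular, F⁻¹(c) is homeomorphic to ℝ × S¹ × S¹. -/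
open Complex

/-- The parametrization `Φ_c : ℝ × S¹ × S¹ → ℂ³` of the fibre `F⁻¹(c)`. -/
noncomputable def PhiHL (c₁ c₂ c₃ : ℝ) (φ : ℝ → ℝ)
    (p : ℝ × ↥(Metric.sphere (0 : ℂ) 1) × ↥(Metric.sphere (0 : ℂ) 1)) : ℂ × ℂ × ℂ :=
  ((Real.sqrt (φ p.1 + c₁) : ℂ) * (p.2.1 : ℂ), (Real.sqrt (φ p.1 + c₂) : ℂ) * (p.2.2 : ℂ),
    ((p.1 : ℂ) + (c₃ : ℂ) * Complex.I) /
      (((Real.sqrt (φ p.1 + c₁) * Real.sqrt (φ p.1 + c₂) : ℝ) : ℂ) * (p.2.1 : ℂ) * (p.2.2 : ℂ)))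

/-!
The cubic `x ↦ (x + c₁)(x + c₂)x` is an increasing bijection of `[0, ∞)`, so `φ` is the
composite of `t ↦ t² + c₃²` with its inverse, hence continuous. On the fibre,
`|z₁|² = |z₃|² + c₁`, `|z₂|² = |z₃|² + c₂` and `|z₁z₂z₃|² = t² + c₃²` with `t = Re(z₁z₂z₃)`,
so `|z₃|² = φ(t)`, and `z₁, z₂` do not vanish. Hence a fibre point is recovered from `t` and the
phases `z₁/|z₁|, z₂/|z₂|`, and this chart is a continuous inverse of `Φ_c`.
-/

open Set Function Topology
open scoped NNReal

local notation "S¹" => Metric.sphere (0 : ℂ) 1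

lemma strictMonoOn_cubic {c₁ c₂ : ℝ} (hc₁ : 0 ≤ c₁) (hc₂ : 0 ≤ c₂) :
    StrictMonoOn (fun x : ℝ => (x + c₁) * (x + c₂) * x) (Ici 0) := by
  intro a (ha : 0 ≤ a) b _ hab
  dsimp only
  gcongr

lemma surjective_nnreal_cubic (c₁ c₂ : ℝ≥0) :
    Surjective fun x : ℝ≥0 => (x + c₁) * (x + c₂) * x := by
  intro y
  have hy : y ≤ (y + 1 + c₁) * (y + 1 + c₂) * (y + 1) := calc
    y ≤ 1 * 1 * (y + 1) := by simp
    _ ≤ _ := by gcongr <;> exact le_add_self.trans le_self_add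
  obtain ⟨x, -, hx⟩ := intermediate_value_Icc (zero_le : (0 : ℝ≥0) ≤ y + 1)
    (by fun_prop : Continuous fun x : ℝ≥0 => (x + c₁) * (x + c₂) * x).continuousOn
    ⟨by simp, hy⟩
  exact ⟨x, hx⟩

lemma StrictMono.continuous_of_continuous_comp {X α β : Type*} [TopologicalSpace X]
    [LinearOrder α] [TopologicalSpace α] [OrderTopology α]
    [LinearOrder β] [TopologicalSpace β] [OrderTopology β]
    {g : α → β} (hg : StrictMono g) (hg' : Surjective g) {f : X → α}
    (hgf : Continuous (g ∘ f)) : Continuous f := by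
  let e := hg.orderIsoOfSurjective g hg'
  convert e.symm.continuous.comp hgf
  ext x
  exact (e.symm_apply_apply (f x)).symm

lemma continuous_of_cubic_comp {X : Type*} [TopologicalSpace X] {c₁ c₂ : ℝ} (hc₁ : 0 ≤ c₁)
    (hc₂ : 0 ≤ c₂) {f h : X → ℝ} (hf : ∀ x, 0 ≤ f x)
    (hfh : ∀ x, (f x + c₁) * (f x + c₂) * f x = h x) (hh : Continuous h) : Continuous f := by
  lift c₁ to ℝ≥0 using hc₁
  lift c₂ to ℝ≥0 using hc₂
  lift f to X → ℝ≥0 using hf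
  have hmono : StrictMono fun x : ℝ≥0 => (x + c₁) * (x + c₂) * x := fun a b hab => by
    dsimp only
    gcongr
  refine NNReal.continuous_coe.comp
    (hmono.continuous_of_continuous_comp (surjective_nnreal_cubic c₁ c₂) ?_)
  refine NNReal.isEmbedding_coe.continuous_iff.2 ?_
  convert hh
  ext x
  simp [← hfh x]

lemma normSq_ofReal_sqrt_mul_s3 {x : ℝ} (hx : 0 ≤ x) (u : S¹) : normSq (√x * (u : ℂ)) = x := by
  rw [normSq_mul, normSq_ofReal, ← sq, Real.sq_sqrt hx, normSq_eq_norm_sq,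
    norm_eq_of_mem_sphere, one_pow, mul_one]

lemma ofReal_mul_div_norm {r : ℝ} (hr : 0 < r) (u : S¹) :
    (r : ℂ) * u / ‖(r : ℂ) * u‖ = u := by
  rw [norm_mul, norm_eq_of_mem_sphere, mul_one, norm_real, Real.norm_of_nonneg hr.le,
    mul_div_cancel_left₀ _ (ofReal_ne_zero.2 hr.ne')]

lemma div_norm_mem_sphere {z : ℂ} (hz : z ≠ 0) : z / ‖z‖ ∈ S¹ := by
  simp [hz]

section Fibre

variable {c₁ c₂ c₃ : ℝ} {z : ℂ × ℂ × ℂ}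

lemma HLfib_eq_iff :
    HLfib z = (c₁, c₂, c₃) ↔ normSq z.1 = normSq z.2.2 + c₁ ∧
      normSq z.2.1 = normSq z.2.2 + c₂ ∧ (z.1 * z.2.1 * z.2.2).im = c₃ := by
  simp only [HLfib, Prod.mk.injEq]
  constructor <;> rintro ⟨h1, h2, h3⟩ <;> exact ⟨by linarith, by linarith, h3⟩

lemma fst_ne_zero_of_HLfib_eq (h : c₃ ≠ 0 ∨ 0 < c₁) (hz : HLfib z = (c₁, c₂, c₃)) :
    z.1 ≠ 0 := by
  obtain ⟨h1, -, h3⟩ := HLfib_eq_iff.1 hz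
  intro hz1
  simp only [hz1, map_zero, zero_mul, zero_im] at h1 h3
  rcases h with h | h
  · exact h h3.symm
  · linarith [normSq_nonneg z.2.2]

lemma snd_ne_zero_of_HLfib_eq (h : c₃ ≠ 0 ∨ 0 < c₂) (hz : HLfib z = (c₁, c₂, c₃)) :
    z.2.1 ≠ 0 := by
  obtain ⟨-, h2, h3⟩ := HLfib_eq_iff.1 hz
  intro hz2
  simp only [hz2, map_zero, mul_zero, zero_mul, zero_im] at h2 h3
  rcases h with h | h
  · exact h h3.symm
  · linarith [normSq_nonneg z.2.2]

lemma normSq_thd_eq_of_HLfib_eq (hc₁ : 0 ≤ c₁) (hc₂ : 0 ≤ c₂) {φ : ℝ → ℝ}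
    (hφ : ∀ t, 0 ≤ φ t ∧ (φ t + c₁) * (φ t + c₂) * φ t = t ^ 2 + c₃ ^ 2)
    (hz : HLfib z = (c₁, c₂, c₃)) : normSq z.2.2 = φ (z.1 * z.2.1 * z.2.2).re := by
  obtain ⟨h1, h2, h3⟩ := HLfib_eq_iff.1 hz
  refine (strictMonoOn_cubic hc₁ hc₂).injOn (normSq_nonneg _) (hφ _).1 ?_
  rw [(hφ _).2, ← h1, ← h2, ← h3, ← normSq_mul, ← normSq_mul, normSq_apply]
  ring

end Fibre

section Parametrization

variable {c₁ c₂ c₃ : ℝ} {φ : ℝ → ℝ}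

lemma phi_add_pos (h₂ : 0 ≤ c₂) (h₃ : c₃ ≠ 0 ∨ 0 < c₂)
    (hφ : ∀ t, 0 ≤ φ t ∧ (φ t + c₁) * (φ t + c₂) * φ t = t ^ 2 + c₃ ^ 2) (t : ℝ) :
    0 < φ t + c₂ := by
  obtain ⟨hφ0, hφt⟩ := hφ t
  rcases h₃ with h | h
  · have hφpos : 0 < φ t := hφ0.lt_of_ne fun h0 => by
      rw [← h0, mul_zero] at hφt
      nlinarith [sq_pos_of_ne_zero h, sq_nonneg t]
    linarith
  · linarith

lemma PhiHL_prod {t : ℝ} (ha : 0 < φ t + c₁) (hb : 0 < φ t + c₂) (u v : S¹) :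
    (PhiHL c₁ c₂ c₃ φ (t, u, v)).1 * (PhiHL c₁ c₂ c₃ φ (t, u, v)).2.1 *
      (PhiHL c₁ c₂ c₃ φ (t, u, v)).2.2 = t + c₃ * I := by
  have ha' : (√(φ t + c₁) : ℂ) ≠ 0 := ofReal_ne_zero.2 (Real.sqrt_pos.2 ha).ne'
  have hb' : (√(φ t + c₂) : ℂ) ≠ 0 := ofReal_ne_zero.2 (Real.sqrt_pos.2 hb).ne'
  have hu := ne_zero_of_mem_unit_sphere u
  have hv := ne_zero_of_mem_unit_sphere v
  simp only [PhiHL]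
  push_cast
  field_simp

lemma normSq_PhiHL_thd {t : ℝ} (ha : 0 < φ t + c₁) (hb : 0 < φ t + c₂)
    (hφt : (φ t + c₁) * (φ t + c₂) * φ t = t ^ 2 + c₃ ^ 2) (u v : S¹) :
    normSq (PhiHL c₁ c₂ c₃ φ (t, u, v)).2.2 = φ t := by
  simp only [PhiHL]
  rw [normSq_div, normSq_mul, normSq_mul, normSq_ofReal, normSq_add_mul_I, normSq_eq_norm_sq u,
    normSq_eq_norm_sq v, norm_eq_of_mem_sphere, norm_eq_of_mem_sphere, ← hφt]
  field_simp
  rw [Real.sq_sqrt ha.le, Real.sq_sqrt hb.le]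

lemma HLfib_PhiHL (h₁ : c₂ ≤ c₁) (hpos : ∀ t, 0 < φ t + c₂)
    (hφ : ∀ t, 0 ≤ φ t ∧ (φ t + c₁) * (φ t + c₂) * φ t = t ^ 2 + c₃ ^ 2)
    (p : ℝ × S¹ × S¹) : HLfib (PhiHL c₁ c₂ c₃ φ p) = (c₁, c₂, c₃) := by
  obtain ⟨t, u, v⟩ := p
  have hb := hpos t
  have ha : 0 < φ t + c₁ := by linarith
  refine HLfib_eq_iff.2 ⟨?_, ?_, ?_⟩
  · rw [normSq_PhiHL_thd ha hb (hφ t).2]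
    exact normSq_ofReal_sqrt_mul_s3 ha.le u
  · rw [normSq_PhiHL_thd ha hb (hφ t).2]
    exact normSq_ofReal_sqrt_mul_s3 hb.le v
  · rw [PhiHL_prod ha hb]
    simp

lemma continuous_PhiHL (h₁ : c₂ ≤ c₁) (hpos : ∀ t, 0 < φ t + c₂) (hφc : Continuous φ) :
    Continuous (PhiHL c₁ c₂ c₃ φ) := by
  refine .prodMk (by fun_prop) (.prodMk (by fun_prop) (.div (by fun_prop) (by fun_prop) ?_))
  rintro ⟨t, u, v⟩
  have hb := hpos t
  have ha : 0 < φ t + c₁ := by linarith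
  simp only [ne_eq, mul_eq_zero, ofReal_eq_zero, Real.sqrt_eq_zero', not_or, not_le]
  exact ⟨⟨⟨ha, hb⟩, ne_zero_of_mem_unit_sphere u⟩, ne_zero_of_mem_unit_sphere v⟩

end Parametrization

section Chart

variable {c₁ c₂ c₃ : ℝ}

noncomputable def fibreChart (h₁ : c₂ ≤ c₁) (h₃ : c₃ ≠ 0 ∨ 0 < c₂)
    (z : HLfib ⁻¹' {(c₁, c₂, c₃)}) : ℝ × S¹ × S¹ :=
  ((z.1.1 * z.1.2.1 * z.1.2.2).re,
    ⟨_, div_norm_mem_sphere (fst_ne_zero_of_HLfib_eq (h₃.imp_right (·.trans_le h₁)) z.2)⟩,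
    ⟨_, div_norm_mem_sphere (snd_ne_zero_of_HLfib_eq h₃ z.2)⟩)

lemma continuous_fibreChart (h₁ : c₂ ≤ c₁) (h₃ : c₃ ≠ 0 ∨ 0 < c₂) :
    Continuous (fibreChart h₁ h₃) := by
  refine .prodMk (by fun_prop) (.prodMk (.subtype_mk ?_ _) (.subtype_mk ?_ _)) <;>
    refine .div (by fun_prop) (by fun_prop) fun z => ofReal_ne_zero.2 (norm_ne_zero_iff.2 ?_)
  exacts [fst_ne_zero_of_HLfib_eq (h₃.imp_right (·.trans_le h₁)) z.2,
    snd_ne_zero_of_HLfib_eq h₃ z.2]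

variable {φ : ℝ → ℝ}

lemma fibreChart_PhiHL (h₁ : c₂ ≤ c₁) (h₃ : c₃ ≠ 0 ∨ 0 < c₂) (hpos : ∀ t, 0 < φ t + c₂)
    (p : ℝ × S¹ × S¹) (hp : PhiHL c₁ c₂ c₃ φ p ∈ HLfib ⁻¹' {(c₁, c₂, c₃)}) :
    fibreChart h₁ h₃ ⟨PhiHL c₁ c₂ c₃ φ p, hp⟩ = p := by
  obtain ⟨t, u, v⟩ := p
  have hb := hpos t
  have ha : 0 < φ t + c₁ := by linarith
  simp only [fibreChart, PhiHL_prod ha hb, add_re, ofReal_re, mul_re, I_re, mul_zero, ofReal_im,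
    I_im, mul_one, sub_self, add_zero, Prod.mk.injEq, true_and]
  exact ⟨Subtype.ext (ofReal_mul_div_norm (Real.sqrt_pos.2 ha) u),
    Subtype.ext (ofReal_mul_div_norm (Real.sqrt_pos.2 hb) v)⟩

lemma PhiHL_fibreChart (h₁ : c₂ ≤ c₁) (h₂ : 0 ≤ c₂) (h₃ : c₃ ≠ 0 ∨ 0 < c₂)
    (hφ : ∀ t, 0 ≤ φ t ∧ (φ t + c₁) * (φ t + c₂) * φ t = t ^ 2 + c₃ ^ 2)
    (z : HLfib ⁻¹' {(c₁, c₂, c₃)}) : PhiHL c₁ c₂ c₃ φ (fibreChart h₁ h₃ z) = z := by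
  obtain ⟨⟨z₁, z₂, z₃⟩, hz⟩ := z
  have hz₁ := fst_ne_zero_of_HLfib_eq (h₃.imp_right (·.trans_le h₁)) hz
  have hz₂ := snd_ne_zero_of_HLfib_eq h₃ hz
  have hx := normSq_thd_eq_of_HLfib_eq (h₂.trans h₁) h₂ hφ hz
  obtain ⟨h1, h2, h3⟩ := HLfib_eq_iff.1 hz
  have hn₁ : √(φ (z₁ * z₂ * z₃).re + c₁) = ‖z₁‖ := by rw [← hx, ← h1, norm_def]
  have hn₂ : √(φ (z₁ * z₂ * z₃).re + c₂) = ‖z₂‖ := by rw [← hx, ← h2, norm_def]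
  have hw : ((z₁ * z₂ * z₃).re : ℂ) + c₃ * I = z₁ * z₂ * z₃ :=
    Complex.ext (by simp) (by simp [← h3])
  simp only [fibreChart, PhiHL, hn₁, hn₂, hw, Prod.mk.injEq]
  have hr₁ : (‖z₁‖ : ℂ) ≠ 0 := ofReal_ne_zero.2 (norm_ne_zero_iff.2 hz₁)
  have hr₂ : (‖z₂‖ : ℂ) ≠ 0 := ofReal_ne_zero.2 (norm_ne_zero_iff.2 hz₂)
  refine ⟨mul_div_cancel₀ _ hr₁, mul_div_cancel₀ _ hr₂, ?_⟩
  push_cast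
  field_simp

end Chart

noncomputable def fibreHomeomorph {c₁ c₂ c₃ : ℝ} (h₁ : c₂ ≤ c₁) (h₂ : 0 ≤ c₂)
    (h₃ : c₃ ≠ 0 ∨ 0 < c₂) {φ : ℝ → ℝ}
    (hφ : ∀ t, 0 ≤ φ t ∧ (φ t + c₁) * (φ t + c₂) * φ t = t ^ 2 + c₃ ^ 2) :
    (ℝ × S¹ × S¹) ≃ₜ HLfib ⁻¹' {(c₁, c₂, c₃)} where
  toFun p := ⟨PhiHL c₁ c₂ c₃ φ p, HLfib_PhiHL h₁ (phi_add_pos h₂ h₃ hφ) hφ p⟩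
  invFun := fibreChart h₁ h₃
  left_inv p := fibreChart_PhiHL h₁ h₃ (phi_add_pos h₂ h₃ hφ) p _
  right_inv z := Subtype.ext (PhiHL_fibreChart h₁ h₂ h₃ hφ z)
  continuous_toFun := (continuous_PhiHL h₁ (phi_add_pos h₂ h₃ hφ)
    (continuous_of_cubic_comp (h₂.trans h₁) h₂ (fun t => (hφ t).1) (fun t => (hφ t).2)
      (by fun_prop))).subtype_mk _
  continuous_invFun := continuous_fibreChart h₁ h₃

/-- For `c₁ ≥ c₂ ≥ 0` and `c₃` with `c₃ ≠ 0` or `c₂ > 0`, the map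
`Φ_c` is a homeomorphism from `ℝ × S¹ × S¹` onto the fibre `F⁻¹(c)` (with its subspace
topology); i.e. it is a topological embedding with range exactly the fibre.  In
particular the fibre is homeomorphic to `ℝ × S¹ × S¹`. -/
theorem fibre_homeomorph (c₁ c₂ c₃ : ℝ) (h₁ : c₂ ≤ c₁) (h₂ : 0 ≤ c₂)
    (h₃ : c₃ ≠ 0 ∨ 0 < c₂) (φ : ℝ → ℝ)
    (hφ : ∀ t, 0 ≤ φ t ∧ (φ t + c₁) * (φ t + c₂) * φ t = t ^ 2 + c₃ ^ 2) :
    Topology.IsEmbedding (PhiHL c₁ c₂ c₃ φ) ∧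
    Set.range (PhiHL c₁ c₂ c₃ φ) = HLfib ⁻¹' {(c₁, c₂, c₃)} ∧
    Nonempty ((ℝ × ↥(Metric.sphere (0 : ℂ) 1) × ↥(Metric.sphere (0 : ℂ) 1)) ≃ₜ
      ↥(HLfib ⁻¹' {(c₁, c₂, c₃)})) := by
  let e := fibreHomeomorph h₁ h₂ h₃ hφ
  have hΦ : PhiHL c₁ c₂ c₃ φ = Subtype.val ∘ e := rfl
  refine ⟨hΦ ▸ IsEmbedding.subtypeVal.comp e.isEmbedding, ?_, ⟨e⟩⟩
  rw [hΦ, e.surjective.range_comp, Subtype.range_coe]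
end

section
/- Let c₁ ≥ c₂ ≥ 0 and c₃ be real numbers with c₃ ≠ 0 or c₂ > 0, and let c = (c₁, c₂, c₃). Then for every ε > 0 there exists R > 0 such that every point z ∈ F⁻¹(c) with |z| ≥ R satisfies dist(z, C ∪ (−C)) ≤ ε, where −C = {−z : z ∈ C} and dist denotes the Euclidean distance from a point to a set in ℂ³. -/
/-!
On the fibre `|z₀|² = |z₂|² + c₁` and `|z₁|² = |z₂|² + c₂`, so with `r = |z₂|` the moduli
`|z₀|, |z₁|` exceed `r` by at most `c₁ / r, c₂ / r`. Rescaling `z₀, z₁` radially to modulus `r`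
moves them by that much; the product `u` of the new coordinates has `|u| = r³` and
`|Im u| ≤ |c₃|`, so rotating `z₂` by the unit `ζ` that makes `uζ` real moves it by
`r |1 - ζ| ≤ 2 r |Im u| / |u| ≤ 2 |c₃| / r²`. The point obtained has three coordinates of modulus
`r` and real product, hence lies in `C` or `-C` according to the sign of that product.
-/

open Complex

/-- The Harvey–Lawson fibration `F : ℂ³ → ℝ³` on Euclidean `ℂ³`. -/
noncomputable def HLfibE (z : EuclideanSpace ℂ (Fin 3)) : ℝ × ℝ × ℝ :=
  (normSq (z 0) - normSq (z 2), normSq (z 1) - normSq (z 2), (z 0 * z 1 * z 2).im)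

/-- The Harvey–Lawson cone `C ⊆ ℂ³` (Euclidean `ℂ³`). -/
noncomputable def HLconeE : Set (EuclideanSpace ℂ (Fin 3)) :=
  {z | z ≠ 0 ∧ ‖z 0‖ = ‖z 1‖ ∧
    ‖z 1‖ = ‖z 2‖ ∧
    (z 0 * z 1 * z 2).im = 0 ∧ 0 < (z 0 * z 1 * z 2).re}

theorem EuclideanSpace.dist_le_sum_dist {𝕜 ι : Type*} [RCLike 𝕜] [Fintype ι]
    (x y : EuclideanSpace 𝕜 ι) : dist x y ≤ ∑ i, dist (x i) (y i) := by
  rw [EuclideanSpace.dist_eq, Real.sqrt_le_left (Finset.sum_nonneg fun _ _ => dist_nonneg)]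
  exact Finset.sum_sq_le_sq_sum_of_nonneg fun _ _ => dist_nonneg

theorem abs_sub_le_abs_sq_sub_div {a b : ℝ} (ha : 0 ≤ a) (hb : 0 < b) :
    |a - b| ≤ |a ^ 2 - b ^ 2| / b := by
  rw [le_div_iff₀ hb, sq_sub_sq, abs_mul, mul_comm]
  gcongr
  rw [abs_of_pos (by positivity)]
  linarith

section Rescale

variable {E : Type*} [NormedAddCommGroup E] [NormedSpace ℝ E] {x : E}

theorem norm_div_norm_smul (hx : x ≠ 0) {r : ℝ} (hr : 0 ≤ r) : ‖(r / ‖x‖) • x‖ = r := by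
  rw [norm_smul, Real.norm_eq_abs, abs_of_nonneg (by positivity),
    div_mul_cancel₀ _ (norm_ne_zero_iff.mpr hx)]

theorem dist_div_norm_smul (hx : x ≠ 0) (r : ℝ) : dist x ((r / ‖x‖) • x) = |‖x‖ - r| := by
  have hx' : ‖x‖ ≠ 0 := norm_ne_zero_iff.mpr hx
  rw [dist_eq_norm, show x - (r / ‖x‖) • x = (1 - r / ‖x‖) • x by rw [sub_smul, one_smul],
    norm_smul, Real.norm_eq_abs, show ‖x‖ - r = (1 - r / ‖x‖) * ‖x‖ by field_simp, abs_mul,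
    abs_norm]

end Rescale

theorem Complex.exists_norm_eq_one_mul_im_eq_zero {u : ℂ} (hu : u ≠ 0) :
    ∃ ζ : ℂ, ‖ζ‖ = 1 ∧ (u * ζ).im = 0 ∧ ‖u‖ * ‖1 - ζ‖ ≤ 2 * |u.im| := by
  obtain ⟨σ, hσ, hσre⟩ : ∃ σ : ℝ, |σ| = 1 ∧ σ * u.re = |u.re| := by
    rcases le_or_gt 0 u.re with h | h
    · exact ⟨1, by simp, by simp [abs_of_nonneg h]⟩
    · exact ⟨-1, by simp, by simp [abs_of_neg h]⟩
  have hunit : u * (σ * ‖u‖ / u) = (σ * ‖u‖ : ℝ) := by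
    push_cast; field_simp
  refine ⟨σ * ‖u‖ / u, by simp [hσ, hu], by rw [hunit, ofReal_im], ?_⟩
  have him : ‖u - u.re‖ = |u.im| := by
    rw [show u - u.re = u.im * I by linear_combination (re_add_im u).symm]
    simp
  have hre : |u.re - σ * ‖u‖| = ‖u‖ - |u.re| := by
    have hσsq : σ * σ = 1 := by rw [← abs_mul_abs_self, hσ, one_mul]
    calc |u.re - σ * ‖u‖| = |σ * u.re - σ * σ * ‖u‖| := by
          rw [mul_assoc, ← mul_sub, abs_mul, hσ, one_mul]
      _ = ‖u‖ - |u.re| := by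
          rw [hσre, hσsq, one_mul, abs_sub_comm, abs_of_nonneg (sub_nonneg.mpr (abs_re_le_norm u))]
  calc ‖u‖ * ‖1 - σ * ‖u‖ / u‖ = ‖(u - u.re) + ((u.re - σ * ‖u‖ : ℝ) : ℂ)‖ := by
        rw [← norm_mul, mul_sub, mul_one, hunit]; push_cast; ring_nf
    _ ≤ |u.im| + |u.re - σ * ‖u‖| := by
        rw [← him, ← Real.norm_eq_abs, ← norm_real]; exact norm_add_le _ _
    _ ≤ 2 * |u.im| := by
        rw [hre]; linarith [norm_le_abs_re_add_abs_im u]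

theorem mem_HLconeE_union_neg {w : EuclideanSpace ℂ (Fin 3)} {r : ℝ} (hr : 0 < r)
    (h0 : ‖w 0‖ = r) (h1 : ‖w 1‖ = r) (h2 : ‖w 2‖ = r) (him : (w 0 * w 1 * w 2).im = 0) :
    w ∈ HLconeE ∪ (fun w => -w) '' HLconeE := by
  have hw : w ≠ 0 := by
    rintro rfl
    simp only [PiLp.zero_apply, norm_zero] at h2
    exact hr.ne h2
  have hre : (w 0 * w 1 * w 2).re ≠ 0 := by
    intro hre
    have hnorm := congrArg norm (Complex.ext hre him : w 0 * w 1 * w 2 = 0)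
    rw [norm_mul, norm_mul, h0, h1, h2, norm_zero] at hnorm
    exact (by positivity : 0 < r * r * r).ne' hnorm
  rcases hre.lt_or_gt with hneg | hpos
  · refine Or.inr ⟨-w, ⟨neg_ne_zero.mpr hw, ?_, ?_, ?_, ?_⟩, neg_neg w⟩ <;>
      simp only [PiLp.neg_apply, norm_neg, neg_mul, mul_neg, neg_neg, neg_re, neg_im]
    exacts [h0.trans h1.symm, h1.trans h2.symm, neg_eq_zero.mpr him, neg_pos.mpr hneg]
  · exact Or.inl ⟨hw, h0.trans h1.symm, h1.trans h2.symm, him, hpos⟩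

theorem infDist_HLconeE_union_neg_le {z : EuclideanSpace ℂ (Fin 3)} (hz₀ : z 0 ≠ 0) (hz₁ : z 1 ≠ 0)
    (hz₂ : z 2 ≠ 0) :
    Metric.infDist z (HLconeE ∪ (fun w => -w) '' HLconeE) ≤
      |‖z 0‖ - ‖z 2‖| + |‖z 1‖ - ‖z 2‖| + 2 * |(z 0 * z 1 * z 2).im| / (‖z 0‖ * ‖z 1‖) := by
  set r := ‖z 2‖
  have hr : 0 < r := norm_pos_iff.mpr hz₂
  have ha₀ : 0 < ‖z 0‖ := norm_pos_iff.mpr hz₀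
  have ha₁ : 0 < ‖z 1‖ := norm_pos_iff.mpr hz₁
  set w₀ := (r / ‖z 0‖) • z 0
  set w₁ := (r / ‖z 1‖) • z 1
  have hw₀ : ‖w₀‖ = r := norm_div_norm_smul hz₀ hr.le
  have hw₁ : ‖w₁‖ = r := norm_div_norm_smul hz₁ hr.le
  set t := r / ‖z 1‖ * (r / ‖z 0‖)
  have hu : w₀ * w₁ * z 2 = t • (z 0 * z 1 * z 2) := by
    simp only [w₀, w₁, t, smul_mul_assoc, mul_smul_comm, smul_smul]
  have hu₀ : ‖w₀ * w₁ * z 2‖ = r ^ 3 := by rw [norm_mul, norm_mul, hw₀, hw₁]; ring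
  obtain ⟨ζ, hζ, hζim, hζdist⟩ := exists_norm_eq_one_mul_im_eq_zero
    (norm_pos_iff.mp (hu₀ ▸ pow_pos hr 3 : 0 < ‖w₀ * w₁ * z 2‖))
  have hmem : !₂[w₀, w₁, z 2 * ζ] ∈ HLconeE ∪ (fun w => -w) '' HLconeE :=
    mem_HLconeE_union_neg hr hw₀ hw₁ (by simp [hζ, r]) (by simpa [mul_assoc] using hζim)
  refine (Metric.infDist_le_dist_of_mem hmem).trans ((EuclideanSpace.dist_le_sum_dist _ _).trans ?_)
  have hd₂ : dist (z 2) (z 2 * ζ) ≤ 2 * |(z 0 * z 1 * z 2).im| / (‖z 0‖ * ‖z 1‖) := by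
    have hζ' : r ^ 3 * ‖1 - ζ‖ ≤ 2 * (t * |(z 0 * z 1 * z 2).im|) := by
      rwa [hu₀, hu, smul_im, smul_eq_mul, abs_mul, abs_of_nonneg (by positivity : 0 ≤ t)]
        at hζdist
    have ht : t * (‖z 0‖ * ‖z 1‖) = r ^ 2 := by
      simp only [t]; field_simp
    rw [dist_eq_norm, ← mul_one_sub, norm_mul, le_div_iff₀ (by positivity)]
    refine le_of_mul_le_mul_left ?_ (pow_pos hr 2)
    calc r ^ 2 * (r * ‖1 - ζ‖ * (‖z 0‖ * ‖z 1‖)) = r ^ 3 * ‖1 - ζ‖ * (‖z 0‖ * ‖z 1‖) := by ring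
      _ ≤ 2 * (t * |(z 0 * z 1 * z 2).im|) * (‖z 0‖ * ‖z 1‖) := by gcongr
      _ = r ^ 2 * (2 * |(z 0 * z 1 * z 2).im|) := by rw [← ht]; ring
  rw [Fin.sum_univ_three]
  simp only [Matrix.cons_val_zero, Matrix.cons_val_one, Matrix.cons_val_two]
  rw [dist_div_norm_smul hz₀, dist_div_norm_smul hz₁]
  gcongr
  exact hd₂

section Fibre

variable {c₁ c₂ c₃ : ℝ} {z : EuclideanSpace ℂ (Fin 3)}

theorem norm_sq_eq_of_HLfibE_eq (hz : HLfibE z = (c₁, c₂, c₃)) :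
    ‖z‖ ^ 2 = 3 * ‖z 2‖ ^ 2 + c₁ + c₂ := by
  simp only [HLfibE, Prod.mk.injEq, normSq_eq_norm_sq] at hz
  rw [EuclideanSpace.norm_sq_eq, Fin.sum_univ_three]
  linarith [hz.1, hz.2.1]

theorem infDist_HLconeE_union_neg_le_of_HLfibE_eq (hc₁ : 0 ≤ c₁) (hc₂ : 0 ≤ c₂)
    (hz : HLfibE z = (c₁, c₂, c₃)) (hr : 0 < ‖z 2‖) :
    Metric.infDist z (HLconeE ∪ (fun w => -w) '' HLconeE) ≤
      (c₁ + c₂) / ‖z 2‖ + 2 * |c₃| / ‖z 2‖ ^ 2 := by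
  simp only [HLfibE, Prod.mk.injEq, normSq_eq_norm_sq] at hz
  obtain ⟨h₀, h₁, rfl⟩ := hz
  set r := ‖z 2‖
  have hr₀ : r ≤ ‖z 0‖ := (pow_le_pow_iff_left₀ hr.le (norm_nonneg _) two_ne_zero).mp (by linarith)
  have hr₁ : r ≤ ‖z 1‖ := (pow_le_pow_iff_left₀ hr.le (norm_nonneg _) two_ne_zero).mp (by linarith)
  have hd₀ : |‖z 0‖ - r| ≤ c₁ / r := by
    simpa [h₀, abs_of_nonneg hc₁] using abs_sub_le_abs_sq_sub_div (norm_nonneg (z 0)) hr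
  have hd₁ : |‖z 1‖ - r| ≤ c₂ / r := by
    simpa [h₁, abs_of_nonneg hc₂] using abs_sub_le_abs_sq_sub_div (norm_nonneg (z 1)) hr
  have hd₂ : 2 * |(z 0 * z 1 * z 2).im| / (‖z 0‖ * ‖z 1‖) ≤ 2 * |(z 0 * z 1 * z 2).im| / r ^ 2 := by
    rw [sq]; gcongr
  refine (infDist_HLconeE_union_neg_le (norm_pos_iff.mp (hr.trans_le hr₀))
    (norm_pos_iff.mp (hr.trans_le hr₁)) (norm_pos_iff.mp hr)).trans ?_
  rw [add_div]
  linarith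

end Fibre

theorem fibre_asymptotic_to_double_cone_general (c₁ c₂ c₃ : ℝ) (h₁ : c₂ ≤ c₁) (h₂ : 0 ≤ c₂) :
    ∀ ε > (0 : ℝ), ∃ R > (0 : ℝ), ∀ z ∈ HLfibE ⁻¹' {(c₁, c₂, c₃)}, R ≤ ‖z‖ →
      Metric.infDist z (HLconeE ∪ (fun w => -w) '' HLconeE) ≤ ε := by
  intro ε hε
  have hc₁ : 0 ≤ c₁ := h₂.trans h₁
  set M := c₁ + c₂ + 2 * |c₃|
  set r₀ := max 1 (M / ε)
  refine ⟨√(3 * r₀ ^ 2 + c₁ + c₂), by positivity, fun z hz hR => ?_⟩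
  set r := ‖z 2‖
  have hr : r₀ ≤ r := by
    rw [Real.sqrt_le_left (norm_nonneg z), norm_sq_eq_of_HLfibE_eq hz] at hR
    exact (pow_le_pow_iff_left₀ (by positivity) (norm_nonneg _) two_ne_zero).mp (by linarith)
  have hr₁ : 1 ≤ r := (le_max_left _ _).trans hr
  calc Metric.infDist z (HLconeE ∪ (fun w => -w) '' HLconeE)
      ≤ (c₁ + c₂) / r + 2 * |c₃| / r ^ 2 :=
        infDist_HLconeE_union_neg_le_of_HLfibE_eq hc₁ h₂ hz (by linarith)
    _ ≤ (c₁ + c₂) / r + 2 * |c₃| / r := by gcongr; exact le_self_pow₀ hr₁ two_ne_zero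
    _ = M / r := by rw [← add_div]
    _ ≤ M / r₀ := by gcongr
    _ ≤ ε := (div_le_iff₀ (by positivity)).mpr ((div_le_iff₀' hε).mp (le_max_right _ _))

/-- For `c₁ ≥ c₂ ≥ 0` and `c₃` with `c₃ ≠ 0` or `c₂ > 0`, the fibre
`F⁻¹(c)` is asymptotic at infinity to `C ∪ (−C)`: for every `ε > 0` there is `R > 0`
such that every `z ∈ F⁻¹(c)` with `|z| ≥ R` satisfies `dist(z, C ∪ (−C)) ≤ ε`
(Euclidean distance from a point to a set in `ℂ³`). -/
theorem fibre_asymptotic_to_double_cone (c₁ c₂ c₃ : ℝ) (h₁ : c₂ ≤ c₁) (h₂ : 0 ≤ c₂)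
    (h₃ : c₃ ≠ 0 ∨ 0 < c₂) :
    ∀ ε > (0 : ℝ), ∃ R > (0 : ℝ), ∀ z ∈ HLfibE ⁻¹' {(c₁, c₂, c₃)}, R ≤ ‖z‖ →
      Metric.infDist z (HLconeE ∪ (fun w => -w) '' HLconeE) ≤ ε :=
  fibre_asymptotic_to_double_cone_general c₁ c₂ c₃ h₁ h₂
end

section
/- Define φ : L₁ → S¹ × ℂ by φ(z₁, z₂, z₃) = (z₁/√(|z₂|² + 1), z₂) and ψ : S¹ × ℂ → ℂ³ by ψ(w, z) = (√(|z|² + 1)·w, z, w̄·z̄). Then φ is well defined (|z₁/√(|z₂|²+1)| = 1 for (z₁,z₂,z₃) ∈ L₁), ψ maps S¹ × ℂ into L₁, φ and ψ are mutually inverse bijections between L₁ and S¹ × ℂ, and ψ is a homeomorphism from S¹ × ℂ onto L₁ (with its subspace topology from ℂ³). In particular L₁ is homeomorphic to S¹ × ℝ². -/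
open Complex

/-- The local model `L₁ ⊆ ℂ³`. -/
noncomputable def Lone : Set (ℂ × ℂ × ℂ) :=
  {z | normSq z.1 - 1 = normSq z.2.1 ∧ normSq z.2.1 = normSq z.2.2 ∧
    (z.1 * z.2.1 * z.2.2).im = 0 ∧ 0 ≤ (z.1 * z.2.1 * z.2.2).re}

/-- `φ : L₁ → S¹ × ℂ`, `φ(z₁,z₂,z₃) = (z₁/√(|z₂|²+1), z₂)`. -/
noncomputable def phiL (z : ℂ × ℂ × ℂ) : ℂ × ℂ :=
  (z.1 / ((Real.sqrt (normSq z.2.1 + 1) : ℝ) : ℂ), z.2.1)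

/-- `ψ : S¹ × ℂ → ℂ³`, `ψ(w,z) = (√(|z|²+1)·w, z, w̄·z̄)`. -/
noncomputable def psiL (p : ℂ × ℂ) : ℂ × ℂ × ℂ :=
  (((Real.sqrt (normSq p.2 + 1) : ℝ) : ℂ) * p.1, p.2,
    (starRingEnd ℂ) p.1 * (starRingEnd ℂ) p.2)

/-- `ψ` restricted to the genuine product `S¹ × ℂ` (with `S¹` the unit circle). -/
noncomputable def psiL' (p : ↥(Metric.sphere (0 : ℂ) 1) × ℂ) : ℂ × ℂ × ℂ :=
  psiL ((p.1 : ℂ), p.2)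

/-!
On `L₁` we have `|z₁| = √(|z₂|² + 1)`, so `z₁` is this radius times a point `w` of the unit
circle, while `|z₃| = |z₂|` and `z₁z₂z₃ ≥ 0` pin `z₃` down to `w̄ z̄₂`: a complex number `c` with
`ac ≥ 0` is a nonnegative multiple of `ā`, and its modulus fixes the factor. Since `φ` is a
continuous left inverse of `ψ` on all of `ℂ × ℂ`, `ψ` is an embedding.
-/

open Complex ComplexConjugate ComplexOrder Topology

lemma sqrt_normSq_add_one_pos (z : ℂ) : 0 < √(normSq z + 1) :=
  Real.sqrt_pos.mpr (by linarith [normSq_nonneg z])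

lemma ofReal_sqrt_normSq_add_one_ne_zero (z : ℂ) : ((√(normSq z + 1) : ℝ) : ℂ) ≠ 0 :=
  ofReal_ne_zero.mpr (sqrt_normSq_add_one_pos z).ne'

lemma mul_self_sqrt_normSq_add_one (z : ℂ) : √(normSq z + 1) * √(normSq z + 1) = normSq z + 1 :=
  Real.mul_self_sqrt (by linarith [normSq_nonneg z])

lemma normSq_mul_eq_of_nonneg_mul {a c : ℂ} (h : 0 ≤ a * c) :
    (normSq a : ℂ) * c = ((‖a‖ * ‖c‖ : ℝ) : ℂ) * conj a := by
  calc (normSq a : ℂ) * c = conj a * (a * c) := by rw [normSq_eq_conj_mul_self, mul_assoc]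
    _ = conj a * ‖a * c‖ := by rw [← eq_coe_norm_of_nonneg h]
    _ = ((‖a‖ * ‖c‖ : ℝ) : ℂ) * conj a := by rw [norm_mul, mul_comm]

lemma mem_Lone_iff {z : ℂ × ℂ × ℂ} :
    z ∈ Lone ↔ normSq z.1 = normSq z.2.1 + 1 ∧ normSq z.2.2 = normSq z.2.1 ∧
      0 ≤ z.1 * z.2.1 * z.2.2 := by
  simp only [Lone, Set.mem_ofPred_eq, nonneg_iff]
  constructor
  · rintro ⟨h₁, h₂, him, hre⟩
    exact ⟨by linarith, h₂.symm, hre, him.symm⟩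
  · rintro ⟨h₁, h₂, hre, him⟩
    exact ⟨by linarith, h₂.symm, him.symm, hre⟩

lemma norm_fst_of_mem_Lone {z : ℂ × ℂ × ℂ} (hz : z ∈ Lone) : ‖z.1‖ = √(normSq z.2.1 + 1) := by
  rw [norm_def, (mem_Lone_iff.mp hz).1]

lemma norm_phiL_fst {z : ℂ × ℂ × ℂ} (hz : z ∈ Lone) : ‖(phiL z).1‖ = 1 := by
  rw [phiL, norm_div, norm_real, Real.norm_of_nonneg (Real.sqrt_nonneg _),
    norm_fst_of_mem_Lone hz, div_self (sqrt_normSq_add_one_pos _).ne']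

lemma psiL_mem_Lone (w z : ℂ) (hw : ‖w‖ = 1) : psiL (w, z) ∈ Lone := by
  have hnw : normSq w = 1 := by rw [normSq_eq_norm_sq, hw, one_pow]
  have hprod : (√(normSq z + 1) : ℂ) * w * z * (conj w * conj z) =
      ((√(normSq z + 1) * normSq z : ℝ) : ℂ) := by
    calc (√(normSq z + 1) : ℂ) * w * z * (conj w * conj z)
        = (√(normSq z + 1) : ℂ) * (w * conj w) * (z * conj z) := by ring
      _ = _ := by rw [mul_conj, mul_conj, hnw]; push_cast; ring
  refine mem_Lone_iff.mpr ⟨?_, ?_, ?_⟩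
  · simp only [psiL, normSq_mul, normSq_ofReal, hnw, mul_self_sqrt_normSq_add_one, mul_one]
  · simp only [psiL, normSq_mul, normSq_conj, hnw, one_mul]
  · simp only [psiL, hprod, zero_le_real]
    exact mul_nonneg (Real.sqrt_nonneg _) (normSq_nonneg z)

lemma psiL_phiL {z : ℂ × ℂ × ℂ} (hz : z ∈ Lone) : psiL (phiL z) = z := by
  obtain ⟨z₁, z₂, z₃⟩ := z
  obtain ⟨h₁, h₃, hprod⟩ := mem_Lone_iff.mp hz
  simp only at h₁ h₃ hprod
  simp only [psiL, phiL, Prod.mk.injEq, map_div₀, conj_ofReal, true_and]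
  set s := √(normSq z₂ + 1)
  have hs : (s : ℂ) ≠ 0 := ofReal_sqrt_normSq_add_one_ne_zero z₂
  refine ⟨mul_div_cancel₀ z₁ hs, ?_⟩
  by_cases hz₂ : z₂ = 0
  · have hz₃ : z₃ = 0 := by rw [← normSq_eq_zero, h₃, hz₂, map_zero]
    simp [hz₂, hz₃]
  have key := normSq_mul_eq_of_nonneg_mul hprod
  have hnorm : ‖z₁ * z₂‖ * ‖z₃‖ = s * normSq z₂ := by
    rw [norm_mul, norm_fst_of_mem_Lone hz, norm_def z₃, h₃, ← norm_def, mul_assoc,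
      ← sq, ← normSq_eq_norm_sq]
  have hnormSq : normSq (z₁ * z₂) = s * (s * normSq z₂) := by
    rw [normSq_mul, h₁, ← mul_self_sqrt_normSq_add_one, mul_assoc]
  rw [hnorm, hnormSq, map_mul] at key
  have hne : ((s * normSq z₂ : ℝ) : ℂ) ≠ 0 := by
    exact_mod_cast mul_ne_zero (sqrt_normSq_add_one_pos z₂).ne' (normSq_pos.mpr hz₂).ne'
  have hsz₃ : (s : ℂ) * z₃ = conj z₁ * conj z₂ :=
    mul_left_cancel₀ hne (by push_cast at key ⊢; linear_combination key)
  rw [div_mul_eq_mul_div, div_eq_iff hs, ← hsz₃, mul_comm]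

lemma phiL_psiL (p : ℂ × ℂ) : phiL (psiL p) = p :=
  Prod.ext (mul_div_cancel_left₀ _ (ofReal_sqrt_normSq_add_one_ne_zero p.2)) rfl

lemma continuous_phiL : Continuous phiL := by
  unfold phiL
  fun_prop (disch := exact fun z => ofReal_sqrt_normSq_add_one_ne_zero _)

lemma continuous_psiL' : Continuous psiL' := by
  unfold psiL' psiL
  fun_prop

lemma isEmbedding_psiL' : IsEmbedding psiL' :=
  .of_comp continuous_psiL' continuous_phiL <| by
    convert IsEmbedding.subtypeVal.prodMap IsEmbedding.id using 1
    exact funext fun p => phiL_psiL _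

lemma range_psiL' : Set.range psiL' = Lone := by
  refine Set.Subset.antisymm ?_ fun z hz => ?_
  · rintro _ ⟨⟨⟨w, hw⟩, z⟩, rfl⟩
    exact psiL_mem_Lone w z (mem_sphere_zero_iff_norm.mp hw)
  · exact ⟨(⟨(phiL z).1, mem_sphere_zero_iff_norm.mpr (norm_phiL_fst hz)⟩, (phiL z).2),
      psiL_phiL hz⟩

noncomputable def loneHomeomorph : ↥Lone ≃ₜ ↥(Metric.sphere (0 : ℂ) 1) × ℂ :=
  (Homeomorph.setCongr range_psiL'.symm).trans isEmbedding_psiL'.toHomeomorph.symm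

/-- `φ` is well defined on `L₁` (first coordinate lands in `S¹`),
`ψ` maps `S¹ × ℂ` into `L₁`, `φ` and `ψ` are mutually inverse, and `ψ` is a
homeomorphism from `S¹ × ℂ` onto `L₁` with its subspace topology.  In particular
`L₁` is homeomorphic to `S¹ × ℝ²`. -/
theorem Lone_parametrization :
    (∀ z ∈ Lone, ‖(phiL z).1‖ = 1) ∧
    (∀ w z : ℂ, ‖w‖ = 1 → psiL (w, z) ∈ Lone) ∧
    (∀ z ∈ Lone, psiL (phiL z) = z) ∧
    (∀ w z : ℂ, ‖w‖ = 1 → phiL (psiL (w, z)) = (w, z)) ∧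
    Topology.IsEmbedding psiL' ∧ Set.range psiL' = Lone ∧
    Nonempty (↥Lone ≃ₜ ↥(Metric.sphere (0 : ℂ) 1) × (ℝ × ℝ)) :=
  ⟨fun _ => norm_phiL_fst, psiL_mem_Lone, fun _ => psiL_phiL,
    fun w z _ => phiL_psiL (w, z), isEmbedding_psiL', range_psiL',
    ⟨loneHomeomorph.trans ((Homeomorph.refl _).prodCongr equivRealProdCLM.toHomeomorph)⟩⟩
end

section
/- The map (u, v) ↦ (u/√3, v/√3, (ū·v̄)/√3) is a homeomorphism from S¹ × S¹ onto the link Σ = C ∩ S⁵, where S⁵ = {z ∈ ℂ³ : |z₁|² + |z₂|² + |z₃|² = 1}. In particular Σ is homeomorphic to the 2-torus T². -/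
/-! On the cone, equal moduli and a positive real product `z₁z₂z₃ = |z₁|³` force
`z₃ = z̄₁z̄₂/|z₁|`, so a point of `C` is determined by `(z₁, z₂)` with `|z₁| = |z₂| > 0`, and
meeting `S⁵` means `|z₁| = 1/√3`. Hence `linkMap` is a continuous bijection from the compact
torus onto `Σ`, and therefore a homeomorphism onto it. -/

open Complex

/-- The Harvey–Lawson cone `C ⊆ ℂ³`. -/
noncomputable def HLcone : Set (ℂ × ℂ × ℂ) :=
  {z | z ≠ 0 ∧ ‖z.1‖ = ‖z.2.1‖ ∧
    ‖z.2.1‖ = ‖z.2.2‖ ∧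
    (z.1 * z.2.1 * z.2.2).im = 0 ∧ 0 < (z.1 * z.2.1 * z.2.2).re}

/-- The unit sphere `S⁵ ⊆ ℂ³`. -/
def unitS5 : Set (ℂ × ℂ × ℂ) :=
  {z | normSq z.1 + normSq z.2.1 + normSq z.2.2 = 1}

/-- The map `S¹ × S¹ → ℂ³`, `(u,v) ↦ (u/√3, v/√3, (ū·v̄)/√3)`. -/
noncomputable def linkMap (p : ↥(Metric.sphere (0 : ℂ) 1) × ↥(Metric.sphere (0 : ℂ) 1)) :
    ℂ × ℂ × ℂ :=
  ((p.1 : ℂ) / ((Real.sqrt 3 : ℝ) : ℂ), (p.2 : ℂ) / ((Real.sqrt 3 : ℝ) : ℂ),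
   (starRingEnd ℂ) (p.1 : ℂ) * (starRingEnd ℂ) (p.2 : ℂ) / ((Real.sqrt 3 : ℝ) : ℂ))

open ComplexConjugate

lemma mul_mul_conj_mul_conj_div_norm {a b : ℂ} (h : ‖a‖ = ‖b‖) :
    a * b * (conj a * conj b / ‖a‖) = ((‖a‖ ^ 3 : ℝ) : ℂ) := by
  rcases eq_or_ne a 0 with rfl | ha
  · simp
  have ha' : ((‖a‖ : ℝ) : ℂ) ≠ 0 := by simpa using ha
  calc a * b * (conj a * conj b / ‖a‖) = (a * conj a) * (b * conj b) / ‖a‖ := by ring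
    _ = ((‖a‖ ^ 3 : ℝ) : ℂ) := by
      rw [mul_conj', mul_conj', ← h]
      field_simp
      push_cast
      ring

lemma eq_coe_norm_of_im_eq_zero_of_re_pos {w : ℂ} (him : w.im = 0) (hre : 0 < w.re) :
    w = ‖w‖ :=
  eq_coe_norm_of_nonneg (nonneg_iff.mpr ⟨hre.le, him.symm⟩)

theorem mk_mem_HLcone_iff {a b c : ℂ} :
    (a, b, c) ∈ HLcone ↔ a ≠ 0 ∧ ‖a‖ = ‖b‖ ∧ c = conj a * conj b / ‖a‖ := by
  simp only [HLcone, Set.mem_ofPred_eq]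
  constructor
  · rintro ⟨hz, hab, hbc, him, hre⟩
    have ha : a ≠ 0 := by
      rintro rfl
      simp_all
    have hb : b ≠ 0 := by rwa [← norm_ne_zero_iff, ← hab, norm_ne_zero_iff]
    refine ⟨ha, hab, mul_left_cancel₀ (mul_ne_zero ha hb) ?_⟩
    rw [mul_mul_conj_mul_conj_div_norm hab, eq_coe_norm_of_im_eq_zero_of_re_pos him hre]
    simp [hab, hbc]
    ring
  · rintro ⟨ha, hab, rfl⟩
    have hprod := mul_mul_conj_mul_conj_div_norm hab
    refine ⟨fun h => ha (congrArg Prod.fst h), hab, ?_, ?_, ?_⟩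
    · simp [hab]
    · rw [hprod, ofReal_im]
    · rw [hprod, ofReal_re]
      positivity

lemma mem_unitS5_iff_of_mem_HLcone {z : ℂ × ℂ × ℂ} (hz : z ∈ HLcone) :
    z ∈ unitS5 ↔ ‖z.1‖ = (√3)⁻¹ := by
  obtain ⟨-, hab, hbc, -⟩ := hz
  simp only [unitS5, Set.mem_ofPred_eq, normSq_eq_norm_sq, ← hbc, ← hab]
  rw [← Real.sqrt_inv, eq_comm (a := ‖z.1‖),
    Real.sqrt_eq_iff_eq_sq (by norm_num) (norm_nonneg _)]
  constructor <;> intro h <;> linarith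

lemma ofReal_sqrt_three_ne_zero : ((√3 : ℝ) : ℂ) ≠ 0 := by
  simp

theorem linkMap_injective : Function.Injective linkMap := by
  rintro ⟨u, v⟩ ⟨u', v'⟩ h
  simp only [linkMap, Prod.mk.injEq, div_left_inj' ofReal_sqrt_three_ne_zero] at h
  ext <;> simp [h.1, h.2.1]

theorem range_linkMap : Set.range linkMap = HLcone ∩ unitS5 := by
  ext ⟨a, b, c⟩
  constructor
  · rintro ⟨⟨⟨u, hu⟩, ⟨v, hv⟩⟩, h⟩
    simp only [linkMap, Prod.mk.injEq] at h
    obtain ⟨rfl, rfl, rfl⟩ := h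
    rw [mem_sphere_zero_iff_norm] at hu hv
    have hnorm_u : ‖u / √3‖ = (√3)⁻¹ := by simp [hu]
    have hnorm_v : ‖v / √3‖ = (√3)⁻¹ := by simp [hv]
    have hu0 : u ≠ 0 := norm_ne_zero_iff.mp (by simp [hu])
    have hC : (u / √3, v / √3, conj u * conj v / √3) ∈ HLcone := by
      refine mk_mem_HLcone_iff.mpr
        ⟨div_ne_zero hu0 ofReal_sqrt_three_ne_zero, hnorm_u.trans hnorm_v.symm, ?_⟩
      rw [hnorm_u, map_div₀, map_div₀, conj_ofReal]
      push_cast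
      field_simp
    exact ⟨hC, (mem_unitS5_iff_of_mem_HLcone hC).mpr hnorm_u⟩
  · rintro ⟨hC, hS⟩
    rw [mem_unitS5_iff_of_mem_HLcone hC] at hS
    obtain ⟨-, hab, rfl⟩ := mk_mem_HLcone_iff.mp hC
    refine ⟨(⟨√3 * a, ?_⟩, ⟨√3 * b, ?_⟩), ?_⟩
    · simp [hS, abs_of_nonneg]
    · simp [← hab, hS, abs_of_nonneg]
    · simp only [linkMap, map_mul, conj_ofReal, hS]
      push_cast
      field_simp

theorem continuous_linkMap : Continuous linkMap := by
  unfold linkMap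
  fun_prop

theorem isEmbedding_linkMap : Topology.IsEmbedding linkMap :=
  (continuous_linkMap.isClosedEmbedding linkMap_injective).isEmbedding

/-- The map `(u,v) ↦ (u/√3, v/√3, (ū·v̄)/√3)` is a homeomorphism
from `S¹ × S¹` onto the link `Σ = C ∩ S⁵`; in particular `Σ` is homeomorphic to the
`2`-torus `T² = S¹ × S¹`. -/
theorem link_is_torus :
    Topology.IsEmbedding linkMap ∧ Set.range linkMap = HLcone ∩ unitS5 ∧
    Nonempty (↥(HLcone ∩ unitS5) ≃ₜ
      ↥(Metric.sphere (0 : ℂ) 1) × ↥(Metric.sphere (0 : ℂ) 1)) :=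
  ⟨isEmbedding_linkMap, range_linkMap,
    ⟨(Homeomorph.setCongr range_linkMap.symm).trans isEmbedding_linkMap.toHomeomorph.symm⟩⟩
end

section
/- The map (λ, u, v) ↦ (λu, λv, λ·ū·v̄) is a homeomorphism from (0, ∞) × S¹ × S¹ onto the cone C. In particular C is a connected subset of ℂ³, and C is invariant under scaling: for every t > 0, t·C = C. -/
open Complex

/-- The map `(0,∞) × S¹ × S¹ → ℂ³`, `(λ,u,v) ↦ (λu, λv, λ·ū·v̄)`. -/
noncomputable def coneMap
    (p : ↥(Set.Ioi (0 : ℝ)) × ↥(Metric.sphere (0 : ℂ) 1) × ↥(Metric.sphere (0 : ℂ) 1)) :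
    ℂ × ℂ × ℂ :=
  (((p.1 : ℝ) : ℂ) * (p.2.1 : ℂ), ((p.1 : ℝ) : ℂ) * (p.2.2 : ℂ),
   ((p.1 : ℝ) : ℂ) * ((starRingEnd ℂ) (p.2.1 : ℂ) * (starRingEnd ℂ) (p.2.2 : ℂ)))

/-!
A point of `C` is determined by its first two coordinates: writing `λ = ‖z₁‖`, the product
`z₁z₂z₃` is a positive real of modulus `λ³`, so `z₃ = z̄₁z̄₂/λ`. Hence the polar-coordinate
map `z ↦ (‖z₁‖, z₁/‖z₁‖, z₂/‖z₂‖)`, continuous on `C` because no coordinate vanishes there,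
inverts `coneMap`; connectedness of `C` is inherited from `(0,∞) × S¹ × S¹`.
-/

open Topology Set
open scoped ComplexOrder ComplexConjugate

section

variable {X Y Z : Type*} [TopologicalSpace X] [TopologicalSpace Y] [TopologicalSpace Z]
  {f : X → Y} {g : Y → Z} {s : Set Y}

theorem Topology.IsInducing.of_comp_of_continuousOn (hf : Continuous f) (hfs : ∀ x, f x ∈ s)
    (hg : ContinuousOn g s) (hgf : IsInducing (g ∘ f)) : IsInducing f := by
  have hcod : IsInducing (Set.codRestrict f s hfs) :=
    .of_comp (hf.codRestrict hfs) hg.domRestrict hgf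
  exact IsInducing.subtypeVal.comp hcod

theorem Topology.IsEmbedding.of_comp_of_continuousOn (hf : Continuous f) (hfs : ∀ x, f x ∈ s)
    (hg : ContinuousOn g s) (hgf : IsEmbedding (g ∘ f)) : IsEmbedding f :=
  ⟨.of_comp_of_continuousOn hf hfs hg hgf.isInducing, hgf.injective.of_comp⟩

end

theorem mem_HLcone_iff {z : ℂ × ℂ × ℂ} :
    z ∈ HLcone ↔ ‖z.1‖ = ‖z.2.1‖ ∧ ‖z.2.1‖ = ‖z.2.2‖ ∧ 0 < z.1 * z.2.1 * z.2.2 := by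
  constructor
  · rintro ⟨-, h₁, h₂, him, hre⟩
    exact ⟨h₁, h₂, Complex.pos_iff.mpr ⟨hre, him.symm⟩⟩
  · rintro ⟨h₁, h₂, hpos⟩
    obtain ⟨hre, him⟩ := Complex.pos_iff.mp hpos
    refine ⟨?_, h₁, h₂, him.symm, hre⟩
    rintro rfl
    simp at hre

theorem ne_zero_of_mem_HLcone {z : ℂ × ℂ × ℂ} (hz : z ∈ HLcone) :
    z.1 ≠ 0 ∧ z.2.1 ≠ 0 ∧ z.2.2 ≠ 0 := by
  have := (mem_HLcone_iff.mp hz).2.2.ne'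
  simp_all

theorem mul_mul_eq_norm_pow_of_mem_HLcone {z : ℂ × ℂ × ℂ} (hz : z ∈ HLcone) :
    z.1 * z.2.1 * z.2.2 = (‖z.1‖ : ℂ) ^ 3 := by
  obtain ⟨h₁, h₂, hpos⟩ := mem_HLcone_iff.mp hz
  rw [eq_coe_norm_of_nonneg hpos.le, norm_mul, norm_mul, ← h₂, ← h₁]
  push_cast
  ring

theorem snd_snd_eq_of_mem_HLcone {z : ℂ × ℂ × ℂ} (hz : z ∈ HLcone) :
    z.2.2 = conj z.1 * conj z.2.1 / ‖z.1‖ := by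
  obtain ⟨hz₁, hz₂, -⟩ := ne_zero_of_mem_HLcone hz
  refine mul_left_cancel₀ (mul_ne_zero hz₁ hz₂) ?_
  calc z.1 * z.2.1 * z.2.2 = (‖z.1‖ : ℂ) ^ 3 := mul_mul_eq_norm_pow_of_mem_HLcone hz
    _ = (z.1 * conj z.1) * (z.2.1 * conj z.2.1) / ‖z.1‖ := by
      rw [mul_conj', mul_conj', ← (mem_HLcone_iff.mp hz).1]
      field_simp
    _ = _ := by ring

theorem smul_mem_HLcone {t : ℝ} (ht : 0 < t) {z : ℂ × ℂ × ℂ} (hz : z ∈ HLcone) :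
    ((t : ℂ) * z.1, (t : ℂ) * z.2.1, (t : ℂ) * z.2.2) ∈ HLcone := by
  obtain ⟨h₁, h₂, hpos⟩ := mem_HLcone_iff.mp hz
  have ht' : (0 : ℂ) < t := by exact_mod_cast ht
  refine mem_HLcone_iff.mpr ⟨by simp [h₁], by simp [h₂], ?_⟩
  calc (0 : ℂ) < (t : ℂ) ^ 3 * (z.1 * z.2.1 * z.2.2) := by positivity
    _ = _ := by ring

theorem image_smul_HLcone {t : ℝ} (ht : 0 < t) :
    (fun z : ℂ × ℂ × ℂ => ((t : ℂ) * z.1, (t : ℂ) * z.2.1, (t : ℂ) * z.2.2)) '' HLcone =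
      HLcone := by
  refine Subset.antisymm (image_subset_iff.mpr fun z hz => smul_mem_HLcone ht hz) fun z hz => ?_
  refine ⟨_, smul_mem_HLcone (inv_pos.mpr ht) hz, ?_⟩
  have ht₀ : (t : ℂ) ≠ 0 := by exact_mod_cast ht.ne'
  simp [ht₀]

theorem continuous_coneMap : Continuous coneMap := by
  unfold coneMap
  fun_prop

theorem range_coneMap_subset : range coneMap ⊆ HLcone := by
  rintro _ ⟨⟨⟨l, hl⟩, ⟨u, hu⟩, ⟨v, hv⟩⟩, rfl⟩
  rw [mem_sphere_zero_iff_norm] at hu hv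
  rw [mem_Ioi] at hl
  have hl' : (0 : ℂ) < l := by exact_mod_cast hl
  refine mem_HLcone_iff.mpr ⟨?_, ?_, ?_⟩
  · simp [coneMap, hu, hv]
  · simp [coneMap, hu, hv]
  · calc (0 : ℂ) < (l : ℂ) ^ 3 := by positivity
      _ = (l : ℂ) ^ 3 * (u * conj u) * (v * conj v) := by simp [mul_conj', hu, hv]
      _ = _ := by simp only [coneMap]; ring

theorem HLcone_subset_range_coneMap : HLcone ⊆ range coneMap := by
  intro z hz
  obtain ⟨hz₁, hz₂, -⟩ := ne_zero_of_mem_HLcone hz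
  have h₁ := (mem_HLcone_iff.mp hz).1
  refine ⟨(⟨‖z.1‖, norm_pos_iff.mpr hz₁⟩, ⟨z.1 / ‖z.1‖, ?_⟩, ⟨z.2.1 / ‖z.1‖, ?_⟩), ?_⟩
  · simp [hz₁]
  · simp [h₁, hz₂]
  · ext <;> simp only [coneMap]
    · field_simp
    · field_simp
    · rw [snd_snd_eq_of_mem_HLcone hz]
      simp only [map_div₀, conj_ofReal]
      field_simp

theorem range_coneMap : range coneMap = HLcone :=
  range_coneMap_subset.antisymm HLcone_subset_range_coneMap

theorem isEmbedding_coneMap : IsEmbedding coneMap := by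
  let ψ : ℂ × ℂ × ℂ → ℝ × ℂ × ℂ := fun z => (‖z.1‖, z.1 / ‖z.1‖, z.2.1 / ‖z.2.1‖)
  have hψ : ContinuousOn ψ HLcone := by
    fun_prop (disch := intro z hz; simp [ne_zero_of_mem_HLcone hz])
  have hψ_comp : ψ ∘ coneMap = Prod.map Subtype.val (Prod.map Subtype.val Subtype.val) := by
    ext ⟨⟨l, hl : 0 < l⟩, ⟨u, hu⟩, ⟨v, hv⟩⟩ <;> rw [mem_sphere_zero_iff_norm] at hu hv <;>
      simp [ψ, coneMap, abs_of_pos hl, hu, hv, hl.ne']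
  refine .of_comp_of_continuousOn continuous_coneMap (fun p => range_coneMap_subset ⟨p, rfl⟩) hψ ?_
  rw [hψ_comp]
  exact IsEmbedding.subtypeVal.prodMap (IsEmbedding.subtypeVal.prodMap IsEmbedding.subtypeVal)

theorem isConnected_HLcone : IsConnected HLcone := by
  have : ConnectedSpace (Ioi (0 : ℝ)) := isConnected_iff_connectedSpace.mp isConnected_Ioi
  have : ConnectedSpace (Metric.sphere (0 : ℂ) 1) := isConnected_iff_connectedSpace.mp <|
    isConnected_sphere (by simp [Complex.rank_real_complex]) 0 zero_le_one
  exact range_coneMap ▸ isConnected_range continuous_coneMap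

/-- The map `(λ,u,v) ↦ (λu, λv, λ·ū·v̄)` is a homeomorphism from
`(0,∞) × S¹ × S¹` onto the cone `C`; in particular `C` is connected, and `C` is
invariant under scaling: `t·C = C` for every `t > 0`. -/
theorem cone_parametrization :
    Topology.IsEmbedding coneMap ∧ Set.range coneMap = HLcone ∧
    IsConnected HLcone ∧
    ∀ t : ℝ, 0 < t →
      (fun z : ℂ × ℂ × ℂ => (((t : ℝ) : ℂ) * z.1, ((t : ℝ) : ℂ) * z.2.1,
        ((t : ℝ) : ℂ) * z.2.2)) '' HLcone = HLcone :=
  ⟨isEmbedding_coneMap, range_coneMap, isConnected_HLcone, fun _ => image_smul_HLcone⟩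
end

section
/- Let Y = {(a,0,0) : a ≥ 0} ∪ {(0,a,0) : a ≥ 0} ∪ {(−a,−a,0) : a ≥ 0} ⊆ ℝ³, let c ∈ Y, and let ε > 0. Then both sets F⁻¹(c) ∩ {z ∈ ℂ³ : Re(z₁z₂z₃) > ε} and F⁻¹(c) ∩ {z ∈ ℂ³ : Re(z₁z₂z₃) < −ε} are connected subsets of ℂ³. -/
open Complex

/-- The set `Y ⊆ ℝ³` of critical values. -/
def Ycrit : Set (ℝ × ℝ × ℝ) :=
  {p | ∃ a : ℝ, 0 ≤ a ∧ p = (a, 0, 0)} ∪ {p | ∃ a : ℝ, 0 ≤ a ∧ p = (0, a, 0)} ∪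
    {p | ∃ a : ℝ, 0 ≤ a ∧ p = (-a, -a, 0)}

/-!
On `F⁻¹(c₁, c₂, 0)` a point with `z₁z₂z₃ > 0` is determined by `q = |z₃|²` and the arguments
`θ₂, θ₃` of `z₂, z₃`: then `|z₁|² = q + c₁`, `|z₂|² = q + c₂` and `arg z₁ = -(θ₂ + θ₃)`, so that
`z₁z₂z₃ = √((q + c₁)(q + c₂)q)`. Hence the piece `Re(z₁z₂z₃) > ε` is the continuous image of
`{q | ε < √((q + c₁)(q + c₂)q)} × ℝ²`, a ray times a plane since the square root is monotone in `q`.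
The piece `Re(z₁z₂z₃) < -ε` is the image of the first under the homeomorphism `z₁ ↦ -z₁`.
-/

theorem Monotone.isPreconnected_preimage_Ioi {α β : Type*} [TopologicalSpace α]
    [ConditionallyCompleteLinearOrder α] [OrderTopology α] [DenselyOrdered α] [Preorder β]
    {f : α → β} (hf : Monotone f) (b : β) : IsPreconnected (f ⁻¹' Set.Ioi b) :=
  ((isUpperSet_Ioi b).preimage hf).ordConnected.isPreconnected

theorem Complex.normSq_ofReal_mul_exp_mul_I (r θ : ℝ) : normSq (r * exp (θ * I)) = r ^ 2 := by
  rw [normSq_eq_norm_sq, norm_mul, norm_exp_ofReal_mul_I, norm_real, mul_one, Real.norm_eq_abs,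
    sq_abs]

namespace HarveyLawson

def fibrePiece (c : ℝ × ℝ × ℝ) (ε : ℝ) : Set (ℂ × ℂ × ℂ) :=
  HLfib ⁻¹' {c} ∩ {z | ε < (z.1 * z.2.1 * z.2.2).re}

/-- `|z₁z₂z₃|` at a point of `F⁻¹(c₁, c₂, 0)` with `|z₃|² = q`. By the junk value `√x = 0` for
`x < 0` it is positive exactly for the admissible `q`, those with `q, q + c₁, q + c₂ > 0`. -/
noncomputable def prodNorm (c₁ c₂ q : ℝ) : ℝ := √(q + c₁) * √(q + c₂) * √q

noncomputable def polarParam (c₁ c₂ : ℝ) (p : ℝ × ℝ × ℝ) : ℂ × ℂ × ℂ :=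
  (√(p.1 + c₁) * exp (((-(p.2.1 + p.2.2) : ℝ) : ℂ) * I), √(p.1 + c₂) * exp (p.2.1 * I),
    √p.1 * exp (p.2.2 * I))

variable (c₁ c₂ : ℝ)

theorem prodNorm_monotone : Monotone (prodNorm c₁ c₂) := by
  have hsqrt (c : ℝ) : Monotone fun q : ℝ ↦ √(q + c) := fun _ _ h ↦
    Real.sqrt_le_sqrt (by linarith)
  exact ((hsqrt c₁).mul (hsqrt c₂) (fun _ ↦ Real.sqrt_nonneg _) fun _ ↦ Real.sqrt_nonneg _).mul
    (fun _ _ h ↦ Real.sqrt_le_sqrt h) (fun _ ↦ mul_nonneg (Real.sqrt_nonneg _)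
      (Real.sqrt_nonneg _)) fun _ ↦ Real.sqrt_nonneg _

theorem exists_lt_prodNorm (ε : ℝ) : ∃ q, ε < prodNorm c₁ c₂ q := by
  refine ⟨|c₁| + |c₂| + (|ε| + 1) ^ 2, ?_⟩
  have h₁ : 1 ≤ √(|c₁| + |c₂| + (|ε| + 1) ^ 2 + c₁) :=
    Real.one_le_sqrt.2 (by nlinarith [neg_abs_le c₁, abs_nonneg c₂, abs_nonneg ε])
  have h₂ : 1 ≤ √(|c₁| + |c₂| + (|ε| + 1) ^ 2 + c₂) :=
    Real.one_le_sqrt.2 (by nlinarith [neg_abs_le c₂, abs_nonneg c₁, abs_nonneg ε])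
  have h₃ : |ε| + 1 ≤ √(|c₁| + |c₂| + (|ε| + 1) ^ 2) :=
    Real.le_sqrt_of_sq_le (by linarith [abs_nonneg c₁, abs_nonneg c₂])
  have h₁₂ : 1 ≤ √(|c₁| + |c₂| + (|ε| + 1) ^ 2 + c₁) * √(|c₁| + |c₂| + (|ε| + 1) ^ 2 + c₂) :=
    one_le_mul_of_one_le_of_one_le h₁ h₂
  unfold prodNorm
  nlinarith [le_abs_self ε, abs_nonneg ε]

theorem isConnected_setOf_lt_prodNorm (ε : ℝ) : IsConnected {q | ε < prodNorm c₁ c₂ q} :=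
  ⟨exists_lt_prodNorm c₁ c₂ ε, (prodNorm_monotone c₁ c₂).isPreconnected_preimage_Ioi ε⟩

theorem continuous_polarParam : Continuous (polarParam c₁ c₂) := by
  unfold polarParam
  fun_prop

theorem polarParam_prod (p : ℝ × ℝ × ℝ) :
    (polarParam c₁ c₂ p).1 * (polarParam c₁ c₂ p).2.1 * (polarParam c₁ c₂ p).2.2 =
      prodNorm c₁ c₂ p.1 := by
  have hexp : exp (((-(p.2.1 + p.2.2) : ℝ) : ℂ) * I) * exp (p.2.1 * I) * exp (p.2.2 * I) = 1 := by
    rw [← exp_add, ← exp_add, ← exp_zero]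
    push_cast
    ring_nf
  simp only [polarParam, prodNorm, ofReal_mul]
  linear_combination (√(p.1 + c₁) * √(p.1 + c₂) * √p.1 : ℂ) * hexp

theorem pos_of_prodNorm_pos {q : ℝ} (h : 0 < prodNorm c₁ c₂ q) :
    0 < q + c₁ ∧ 0 < q + c₂ ∧ 0 < q := by
  simp only [prodNorm] at h
  refine ⟨?_, ?_, ?_⟩ <;> by_contra! hle <;> simp [Real.sqrt_eq_zero'.2 hle] at h

theorem HLfib_polarParam {p : ℝ × ℝ × ℝ} (hp : 0 < prodNorm c₁ c₂ p.1) :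
    HLfib (polarParam c₁ c₂ p) = (c₁, c₂, 0) := by
  obtain ⟨hq₁, hq₂, hq⟩ := pos_of_prodNorm_pos c₁ c₂ hp
  simp only [HLfib, polarParam_prod, ofReal_im]
  simp only [polarParam, normSq_ofReal_mul_exp_mul_I, Real.sq_sqrt hq.le, Real.sq_sqrt hq₁.le,
    Real.sq_sqrt hq₂.le]
  ring_nf

theorem prodNorm_normSq {z : ℂ × ℂ × ℂ} (hz : HLfib z = (c₁, c₂, 0)) :
    prodNorm c₁ c₂ (normSq z.2.2) = ‖z.1 * z.2.1 * z.2.2‖ := by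
  simp only [HLfib, Prod.mk.injEq] at hz
  rw [prodNorm, show normSq z.2.2 + c₁ = normSq z.1 by linarith,
    show normSq z.2.2 + c₂ = normSq z.2.1 by linarith, ← norm_def, ← norm_def, ← norm_def,
    norm_mul, norm_mul]

theorem polarParam_normSq_arg {z : ℂ × ℂ × ℂ} (hz : HLfib z = (c₁, c₂, 0))
    (hpos : 0 < (z.1 * z.2.1 * z.2.2).re) :
    polarParam c₁ c₂ (normSq z.2.2, arg z.2.1, arg z.2.2) = z := by
  have hreal : (z.1 * z.2.1 * z.2.2 : ℂ) = prodNorm c₁ c₂ (normSq z.2.2) := by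
    have him : (z.1 * z.2.1 * z.2.2).im = 0 := congrArg (·.2.2) hz
    rw [prodNorm_normSq c₁ c₂ hz, ← abs_re_eq_norm.2 him, abs_of_pos hpos]
    exact Complex.ext rfl him
  have hz₂ : (polarParam c₁ c₂ (normSq z.2.2, arg z.2.1, arg z.2.2)).2.1 = z.2.1 := by
    simp only [HLfib, Prod.mk.injEq] at hz
    rw [polarParam, show normSq z.2.2 + c₂ = normSq z.2.1 by linarith, ← norm_def]
    exact norm_mul_exp_arg_mul_I _
  have hz₃ : (polarParam c₁ c₂ (normSq z.2.2, arg z.2.1, arg z.2.2)).2.2 = z.2.2 := by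
    rw [polarParam, ← norm_def]
    exact norm_mul_exp_arg_mul_I _
  have hne : z.2.1 * z.2.2 ≠ 0 := by
    rintro h
    simp [mul_assoc, h] at hpos
  have hprod := polarParam_prod c₁ c₂ (normSq z.2.2, arg z.2.1, arg z.2.2)
  rw [hz₂, hz₃] at hprod
  refine Prod.ext (mul_right_cancel₀ hne ?_) (Prod.ext hz₂ hz₃)
  linear_combination hprod - hreal

theorem image_polarParam {ε : ℝ} (hε : 0 ≤ ε) :
    polarParam c₁ c₂ '' ({q | ε < prodNorm c₁ c₂ q} ×ˢ Set.univ) = fibrePiece (c₁, c₂, 0) ε := by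
  apply Set.Subset.antisymm
  · rintro _ ⟨p, ⟨hp, -⟩, rfl⟩
    refine ⟨HLfib_polarParam c₁ c₂ (hε.trans_lt hp), ?_⟩
    show ε < ((_ : ℂ) * _ * _).re
    rwa [polarParam_prod, ofReal_re]
  · rintro z ⟨hz, hre⟩
    have hz : HLfib z = (c₁, c₂, 0) := hz
    refine ⟨(normSq z.2.2, arg z.2.1, arg z.2.2), ⟨?_, Set.mem_univ _⟩,
      polarParam_normSq_arg c₁ c₂ hz (hε.trans_lt hre)⟩
    show ε < prodNorm c₁ c₂ (normSq z.2.2)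
    rw [prodNorm_normSq c₁ c₂ hz]
    exact hre.trans_le (re_le_norm _)

theorem isConnected_fibrePiece {ε : ℝ} (hε : 0 ≤ ε) : IsConnected (fibrePiece (c₁, c₂, 0) ε) := by
  rw [← image_polarParam c₁ c₂ hε]
  exact ((isConnected_setOf_lt_prodNorm c₁ c₂ ε).prod isConnected_univ).image _
    (continuous_polarParam c₁ c₂).continuousOn

theorem preimage_neg_fst_fibrePiece (ε : ℝ) :
    Homeomorph.prodCongr (Homeomorph.neg ℂ) (Homeomorph.refl (ℂ × ℂ)) ⁻¹' fibrePiece (c₁, c₂, 0) ε =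
      HLfib ⁻¹' {(c₁, c₂, 0)} ∩ {z | (z.1 * z.2.1 * z.2.2).re < -ε} := by
  ext z
  simp [fibrePiece, HLfib, -mul_re, -mul_im, lt_neg]

end HarveyLawson

/-- For `c ∈ Y` and `ε > 0`, both
`F⁻¹(c) ∩ {Re(z₁z₂z₃) > ε}` and `F⁻¹(c) ∩ {Re(z₁z₂z₃) < −ε}` are connected
subsets of `ℂ³`. -/
theorem fibre_pieces_connected (c : ℝ × ℝ × ℝ) (hc : c ∈ Ycrit) (ε : ℝ) (hε : 0 < ε) :
    IsConnected (HLfib ⁻¹' {c} ∩ {z : ℂ × ℂ × ℂ | ε < (z.1 * z.2.1 * z.2.2).re}) ∧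
    IsConnected (HLfib ⁻¹' {c} ∩ {z : ℂ × ℂ × ℂ | (z.1 * z.2.1 * z.2.2).re < -ε}) := by
  obtain ⟨c₁, c₂, rfl⟩ : ∃ c₁ c₂ : ℝ, c = (c₁, c₂, 0) := by
    rcases hc with (⟨a, -, rfl⟩ | ⟨a, -, rfl⟩) | ⟨a, -, rfl⟩ <;> exact ⟨_, _, rfl⟩
  have hpos := HarveyLawson.isConnected_fibrePiece c₁ c₂ hε.le
  refine ⟨hpos, ?_⟩
  rw [← HarveyLawson.preimage_neg_fst_fibrePiece]
  exact (Homeomorph.isConnected_preimage _).2 hpos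
end
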